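/- arXiv:2007.11905 — 3 statements merged into one kernel-verified Lean document; each statement's English description precedes it below -/
import Mathlib

section
/- Let U be an even MPO tensor generating a type II fMPU with antiperiodic boundary conditions, such that U/√d is a graded normal degenerate tensor. Then d is even and the number of physical indices n ∈ {0,…,d−1} with |n| = 0 equals the number with |n| = 1 (both equal to d/2). -/
/-!
Write `U^{n,m} = (σˣ)^{|n|+|m|} ⊗ N^{n,m}`. Since `tr (σˣ)^k = 1 + (-1)^k`, the entry
`⟨n|U^{(N)}|m⟩` is `±(1 + (-1)^{|n|+|m|}) tr (N^{n₁m₁} ⋯ N^{n_N m_N})`, so its squared modulus is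
`2 (1 + (-1)^{|n|+|m|}) |tr (N^{n₁m₁} ⋯ N^{n_N m_N})|²`.

The columns and the rows of `U^{(N)}/√2` are unit vectors. Summing the squared moduli against
weights `∏ⱼ wⱼ(mⱼ)`, resp. `∏ⱼ wⱼ(nⱼ)`, with `wⱼ ∈ {1, (-1)^{|·|}}` gives trace identities for the
weighted transfer matrices `E_w = Σ w(n,m) N^{n,m} ⊗ conj N^{n,m}`. With `S₁ = E_1`,
`S₂ = E_{(-1)^{|n|+|m|}}`, `K₁ = E_{(-1)^{|n|}}`, `K₂ = E_{(-1)^{|m|}}` and `t = Σₙ (-1)^{|n|}`,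
for `a + c ≥ 1`:
  `tᵃ dᶜ = tr (K₂ᵃ S₁ᶜ) + tr (K₁ᵃ S₂ᶜ) = tr (K₁ᵃ S₁ᶜ) + tr (K₂ᵃ S₂ᶜ)`.

For `a = 0`, resp. `c = 0`, the joint spectrum of `S₁, S₂` has power sums `dᴺ`, that of `K₁, K₂`
has power sums `tᴺ`. A multiset whose power sums are `tᴺ` with `t ≠ 0` is `{t}` up to zeros
(Vandermonde). So if `t ≠ 0` (hence `d ≠ 0`), one of `S₁, S₂` and one of `K₁, K₂` is nilpotent,
and one of the two mixed identities with `a = c` large reads `tᵃ dᵃ = 0`. Hence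
`t = #{n | |n| = 0} - #{n | |n| = 1} = 0`.
-/

open Matrix Kronecker
open scoped ComplexOrder

namespace FQCA

noncomputable section

/-- The sign `(-1)^x` associated with a parity `x ∈ ℤ₂`. -/
def sgn (x : ZMod 2) : ℂ := (-1 : ℂ) ^ x.val

/-- Entrywise complex conjugation of a matrix. -/
def mconj {m n : Type*} (A : Matrix m n ℂ) : Matrix m n ℂ := A.map (starRingEnd ℂ)

/-- A diagonal matrix with diagonal entries `±1`. -/
def IsParityMatrix {ν : Type*} (Z : Matrix ν ν ℂ) : Prop :=
  Z.IsDiag ∧ ∀ α, Z α α = 1 ∨ Z α α = -1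

/-- An even tensor: `Z * A i = (-1)^{|i|} A i * Z`. -/
def EvenTensor {ι ν : Type*} [Fintype ν] (p : ι → ZMod 2)
    (A : ι → Matrix ν ν ℂ) (Z : Matrix ν ν ℂ) : Prop :=
  ∀ i, Z * A i = sgn (p i) • (A i * Z)

/-- The transfer matrix `E_A = Σ_i A^i ⊗ conj (A^i)`. -/
def transfer {ι ν : Type*} [Fintype ι] (A : ι → Matrix ν ν ℂ) :
    Matrix (ν × ν) (ν × ν) ℂ :=
  ∑ i, (A i) ⊗ₖ (mconj (A i))

/-- `P` is the orthogonal projector of a nonzero proper graded invariant subspace for `A`. -/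
def GradedInvariantProj {ι ν : Type*} [Fintype ν] [DecidableEq ν]
    (A : ι → Matrix ν ν ℂ) (Z P : Matrix ν ν ℂ) : Prop :=
  P * P = P ∧ Pᴴ = P ∧ P ≠ 0 ∧ P ≠ 1 ∧ P * Z = Z * P ∧ ∀ i, A i * P = P * (A i * P)

/-- A graded irreducible tensor: no nonzero proper graded invariant subspace. -/
def GradedIrreducible {ι ν : Type*} [Fintype ν] [DecidableEq ν]
    (A : ι → Matrix ν ν ℂ) (Z : Matrix ν ν ℂ) : Prop :=
  ¬ ∃ P, GradedInvariantProj A Z P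

/-- A graded normal tensor, `mult = 1` (non-degenerate) or `2` (degenerate):
graded irreducible, `1` is an eigenvalue of the transfer matrix of algebraic multiplicity
`mult`, and all other eigenvalues have modulus `< 1`. -/
def GradedNormal {ι ν : Type*} [Fintype ι] [Fintype ν] [DecidableEq ν]
    (A : ι → Matrix ν ν ℂ) (Z : Matrix ν ν ℂ) (mult : ℕ) : Prop :=
  GradedIrreducible A Z ∧
  (Matrix.charpoly (transfer A)).rootMultiplicity 1 = mult ∧
  ∀ μ ∈ spectrum ℂ (transfer A), μ ≠ 1 → ‖μ‖ < 1

/-- Graded Canonical Form: `A^i = ⊕ₖ μₖ Aₖ^i` with `Z` block diagonal in the same way and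
every block a graded normal tensor. -/
def GCF {ι ν : Type*} [Fintype ι] [Fintype ν] [DecidableEq ν]
    (p : ι → ZMod 2) (A : ι → Matrix ν ν ℂ) (Z : Matrix ν ν ℂ) : Prop :=
  ∃ (g : ℕ) (Dk : Fin g → ℕ) (e : ν ≃ ((k : Fin g) × Fin (Dk k)))
    (μ : Fin g → ℂ)
    (Ak : (k : Fin g) → ι → Matrix (Fin (Dk k)) (Fin (Dk k)) ℂ)
    (Zk : (k : Fin g) → Matrix (Fin (Dk k)) (Fin (Dk k)) ℂ),
    0 < g ∧
    (∀ i, Matrix.reindex e e (A i) = Matrix.blockDiagonal' (fun k => μ k • Ak k i)) ∧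
    Matrix.reindex e e Z = Matrix.blockDiagonal' Zk ∧
    ∀ k, IsParityMatrix (Zk k) ∧ EvenTensor p (Ak k) (Zk k) ∧
      (GradedNormal (Ak k) (Zk k) 1 ∨ GradedNormal (Ak k) (Zk k) 2)

/-- The coefficient `tr(A^{n₁} ⋯ A^{n_N})` of the fMPS with antiperiodic boundary
conditions generated by the tensor `A`. -/
def mpsCoeff {ι ν : Type*} [Fintype ν] [DecidableEq ν] {N : ℕ}
    (A : ι → Matrix ν ν ℂ) (n : Fin N → ι) : ℂ :=
  ((List.ofFn fun j => A (n j)).prod).trace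

/-- The fermionic sign `σ(n,m) = Σ_{k<j} (|n_j|+|m_j|)·|m_k|` of an fMPO matrix element. -/
def mpoSign {ι : Type*} (p : ι → ZMod 2) {N : ℕ} (n m : Fin N → ι) : ZMod 2 :=
  ∑ jk ∈ Finset.univ.filter (fun jk : Fin N × Fin N => jk.2 < jk.1),
    (p (n jk.1) + p (m jk.1)) * p (m jk.2)

/-- The fMPO with antiperiodic boundary conditions generated by the MPO tensor `U`. -/
def fMPO {ι : Type*} (p : ι → ZMod 2) {ν : Type*} [Fintype ν] [DecidableEq ν]
    (U : ι → ι → Matrix ν ν ℂ) (N : ℕ) :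
    Matrix (Fin N → ι) (Fin N → ι) ℂ :=
  Matrix.of fun n m =>
    sgn (mpoSign p n m) * ((List.ofFn fun j => U (n j) (m j)).prod).trace

/-- The fMPO with periodic boundary conditions generated by the MPO tensor `U`
(parity operator `Z` inserted in the trace). -/
def fMPO_PBC {ι : Type*} (p : ι → ZMod 2) {ν : Type*} [Fintype ν] [DecidableEq ν]
    (Z : Matrix ν ν ℂ) (U : ι → ι → Matrix ν ν ℂ) (N : ℕ) :
    Matrix (Fin N → ι) (Fin N → ι) ℂ :=
  Matrix.of fun n m =>
    sgn (mpoSign p n m) * (Z * (List.ofFn fun j => U (n j) (m j)).prod).trace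

/-- The fermionic blocking sign `τ(n,m) = Σ_{j<l} |m_j|·(|n_l|+|m_l|)`. -/
def blockSign {ι : Type*} (p : ι → ZMod 2) {q : ℕ} (n m : Fin q → ι) : ZMod 2 :=
  ∑ jl ∈ Finset.univ.filter (fun jl : Fin q × Fin q => jl.1 < jl.2),
    p (m jl.1) * (p (n jl.2) + p (m jl.2))

/-- The `q`-fold blocked MPO tensor, with the fermionic blocking signs. -/
def blocked {ι : Type*} (p : ι → ZMod 2) {ν : Type*} [Fintype ν] [DecidableEq ν]
    (U : ι → ι → Matrix ν ν ℂ) (q : ℕ) :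
    (Fin q → ι) → (Fin q → ι) → Matrix ν ν ℂ :=
  fun n m => sgn (blockSign p n m) • ((List.ofFn fun j => U (n j) (m j)).prod)

/-- The right rank `r(U)`: rank of the matrix with entry
`(-1)^{|n||m|} (U^{n,m})_{α,β}` in row `(n,β)` and column `(m,α)`. -/
def rightRank {ι ν : Type*} [Fintype ι] [Fintype ν]
    (p : ι → ZMod 2) (U : ι → ι → Matrix ν ν ℂ) : ℕ :=
  (Matrix.of fun (r c : ι × ν) => sgn (p r.1 * p c.1) * U r.1 c.1 c.2 r.2).rank

/-- The left rank `ℓ(U)`: rank of the matrix with entry `(U^{n,m})_{α,β}`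
in row `(n,α)` and column `(m,β)`. -/
def leftRank {ι ν : Type*} [Fintype ι] [Fintype ν]
    (U : ι → ι → Matrix ν ν ℂ) : ℕ :=
  (Matrix.of fun (r c : ι × ν) => U r.1 c.1 r.2 c.2).rank

/-- The Pauli matrix `σˣ`, indexed by `Bool`. -/
def pauliX : Matrix Bool Bool ℂ := Matrix.of fun a b => if a = b then 0 else 1

/-- The Pauli matrix `σᶻ`, indexed by `Bool`. -/
def pauliZ : Matrix Bool Bool ℂ := Matrix.diagonal (fun b => if b then -1 else 1)

/-- The single-site physical parity matrix `P = diag((-1)^{|i|})`. -/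
def singleP {ι : Type*} [DecidableEq ι] (p : ι → ZMod 2) : Matrix ι ι ℂ :=
  Matrix.diagonal (fun i => sgn (p i))

/-- The parity of the doubled physical index `(n,m)` of an MPO tensor. -/
def doubledP {ι : Type*} (p : ι → ZMod 2) : ι × ι → ZMod 2 :=
  fun nm => p nm.1 + p nm.2

/-- An MPO tensor regarded as a tensor in the doubled physical index. -/
def doubledT {ι ν : Type*} (U : ι → ι → Matrix ν ν ℂ) : ι × ι → Matrix ν ν ℂ :=
  fun nm => U nm.1 nm.2

/-- An MPO tensor rescaled by `c`, regarded as a tensor in the doubled physical index. -/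
def mpoScaled {ι ν : Type*} (c : ℂ) (U : ι → ι → Matrix ν ν ℂ) : ι × ι → Matrix ν ν ℂ :=
  fun nm => c • U nm.1 nm.2

/-- The parity operator `σᶻ ⊗ I` on the bond space `Bool × Fin b`. -/
def ZBP (b : ℕ) : Matrix (Bool × Fin b) (Bool × Fin b) ℂ :=
  pauliZ ⊗ₖ (1 : Matrix (Fin b) (Fin b) ℂ)

/-- Structure of a type II MPO tensor: `U^{n,m} = (σˣ)^{|n|+|m|} ⊗ N^{n,m}`. -/
def TypeIIStruct {d b : ℕ} (p : Fin d → ZMod 2)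
    (U : Fin d → Fin d → Matrix (Bool × Fin b) (Bool × Fin b) ℂ) : Prop :=
  ∃ Nm : Fin d → Fin d → Matrix (Fin b) (Fin b) ℂ,
    ∀ n m', U n m' = (pauliX ^ (p n + p m').val) ⊗ₖ Nm n m'

/-- The parity matrix of the product grading on `q` sites. -/
def bigP {d : ℕ} (p : Fin d → ZMod 2) (q : ℕ) :
    Matrix (Fin q → Fin d) (Fin q → Fin d) ℂ :=
  Matrix.diagonal (fun n => sgn (∑ i, p (n i)))

/-- The Jordan-Wigner embedding at site `j` of a local operator `O` homogeneous of
parity `o`: `P^{|O|} ⊗ ⋯ ⊗ P^{|O|} ⊗ O ⊗ I ⊗ ⋯ ⊗ I`. -/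
def jordanWigner {d N : ℕ} (p : Fin d → ZMod 2) (o : ZMod 2)
    (O : Matrix (Fin d) (Fin d) ℂ) (j : Fin N) :
    Matrix (Fin N → Fin d) (Fin N → Fin d) ℂ :=
  Matrix.of fun n m =>
    (∏ l ∈ Finset.univ.filter (fun l : Fin N => l < j),
      ((singleP p) ^ o.val) (n l) (m l)) *
    O (n j) (m j) *
    (∏ l ∈ Finset.univ.filter (fun l : Fin N => j < l),
      (if n l = m l then (1:ℂ) else 0))

lemma prod_ofFn_sum {R : Type*} [Semiring R] {ι : Type*} [Fintype ι] :
    ∀ {N : ℕ} (f : Fin N → ι → R),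
      (List.ofFn fun j => ∑ i, f j i).prod = ∑ g : Fin N → ι, (List.ofFn fun j => f j (g j)).prod
  | 0, _ => by simp
  | N + 1, f => by
    rw [List.ofFn_succ, List.prod_cons, prod_ofFn_sum fun j => f j.succ, Finset.sum_mul_sum,
      ← (Fin.consEquiv fun _ => ι).sum_comp, Fintype.sum_prod_type]
    simp [Fin.consEquiv_apply, List.ofFn_succ]

lemma prod_ofFn_smul {S R : Type*} [CommSemiring S] [Semiring R] [Algebra S R] :
    ∀ {N : ℕ} (c : Fin N → S) (F : Fin N → R),
      (List.ofFn fun j => c j • F j).prod = (∏ j, c j) • (List.ofFn F).prod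
  | 0, _, _ => by simp
  | N + 1, c, F => by
    rw [List.ofFn_succ, List.prod_cons, prod_ofFn_smul fun j => c j.succ, Fin.prod_univ_succ,
      List.ofFn_succ, List.prod_cons, smul_mul_smul_comm, mul_smul]

lemma prod_ofFn_apply_ite_lt {α M : Type*} [Monoid M] (φ : α → M) (a c : ℕ) (x y : α) :
    (List.ofFn fun j : Fin (a + c) => φ (if (j : ℕ) < a then x else y)).prod =
      φ x ^ a * φ y ^ c := by
  rw [List.ofFn_add, List.prod_append]
  simp [List.ofFn_const]

lemma prod_ofFn_kronecker {R : Type*} [CommSemiring R] {l m : Type*} [Fintype l]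
    [DecidableEq l] [Fintype m] [DecidableEq m] :
    ∀ {N : ℕ} (A : Fin N → Matrix l l R) (B : Fin N → Matrix m m R),
      (List.ofFn fun j => A j ⊗ₖ B j).prod = (List.ofFn A).prod ⊗ₖ (List.ofFn B).prod
  | 0, _, _ => by simp
  | N + 1, A, B => by
    simp only [List.ofFn_succ, List.prod_cons]
    rw [prod_ofFn_kronecker, mul_kronecker_mul]

lemma mconj_list_prod {m : Type*} [Fintype m] [DecidableEq m] (l : List (Matrix m m ℂ)) :
    mconj l.prod = (l.map mconj).prod :=
  map_list_prod (starRingEnd ℂ).mapMatrix l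

lemma trace_mconj {m : Type*} [Fintype m] (A : Matrix m m ℂ) :
    (mconj A).trace = starRingEnd ℂ A.trace :=
  (AddMonoidHom.map_trace (starRingEnd ℂ) A).symm

lemma sgn_add (x y : ZMod 2) : sgn (x + y) = sgn x * sgn y := by
  rw [sgn, sgn, sgn, ZMod.val_add, ← pow_eq_pow_mod _ neg_one_sq, pow_add]

lemma sgn_sum {ι : Type*} (s : Finset ι) (x : ι → ZMod 2) :
    sgn (∑ i ∈ s, x i) = ∏ i ∈ s, sgn (x i) := by
  classical
  induction s using Finset.induction_on with
  | empty => simp [sgn]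
  | insert i s hi ih => rw [Finset.sum_insert hi, Finset.prod_insert hi, sgn_add, ih]

lemma sgn_mul_self (x : ZMod 2) : sgn x * sgn x = 1 := by
  rw [← sgn_add, CharTwo.add_self_eq_zero]
  simp [sgn]

lemma conj_sgn (x : ZMod 2) : starRingEnd ℂ (sgn x) = sgn x := by
  simp [sgn]

lemma sgn_snd_mul_sgn_doubledP {ι : Type*} (p : ι → ZMod 2) :
    ((fun q : ι × ι => sgn (p q.2)) * fun q => sgn (doubledP p q)) = fun q => sgn (p q.1) :=
  funext fun q => by
    simp only [Pi.mul_apply, doubledP, sgn_add]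
    linear_combination sgn (p q.1) * sgn_mul_self (p q.2)

lemma sgn_fst_mul_sgn_doubledP {ι : Type*} (p : ι → ZMod 2) :
    ((fun q : ι × ι => sgn (p q.1)) * fun q => sgn (doubledP p q)) = fun q => sgn (p q.2) :=
  funext fun q => by
    simp only [Pi.mul_apply, doubledP, sgn_add]
    linear_combination sgn (p q.2) * sgn_mul_self (p q.1)

lemma sgn_eq_ite (x : ZMod 2) : sgn x = if x = 0 then 1 else -1 := by
  rcases (by decide : ∀ y : ZMod 2, y = 0 ∨ y = 1) x with rfl | rfl <;> simp [sgn, ZMod.val_one]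

lemma pauliX_sq : pauliX ^ 2 = 1 := by
  ext a b
  fin_cases a <;> fin_cases b <;> simp [pauliX, sq, mul_apply]

lemma pauliX_pow_val_add (x y : ZMod 2) :
    pauliX ^ (x + y).val = pauliX ^ x.val * pauliX ^ y.val := by
  rw [ZMod.val_add, ← pow_eq_pow_mod _ pauliX_sq, pow_add]

lemma prod_ofFn_pauliX_pow_val : ∀ {N : ℕ} (x : Fin N → ZMod 2),
    (List.ofFn fun j => pauliX ^ (x j).val).prod = pauliX ^ (∑ j, x j).val
  | 0, _ => by simp
  | N + 1, x => by
    rw [List.ofFn_succ, List.prod_cons, prod_ofFn_pauliX_pow_val, Fin.sum_univ_succ,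
      pauliX_pow_val_add]

lemma trace_pauliX_pow_val (x : ZMod 2) : (pauliX ^ x.val).trace = 1 + sgn x := by
  rcases (by decide : ∀ y : ZMod 2, y = 0 ∨ y = 1) x with rfl | rfl <;>
    norm_num [sgn, pauliX, trace, ZMod.val_one]

section Unitary

variable {κ : Type*} [Fintype κ] [DecidableEq κ] {A : Matrix κ κ ℂ}

lemma conj_inv_sqrt_two_mul_self :
    starRingEnd ℂ (Real.sqrt 2 : ℂ)⁻¹ * (Real.sqrt 2 : ℂ)⁻¹ = 2⁻¹ := by
  rw [map_inv₀, Complex.conj_ofReal, ← mul_inv, ← Complex.ofReal_mul,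
    Real.mul_self_sqrt zero_le_two, Complex.ofReal_ofNat]

lemma sum_col_mul_conj_eq_two (hA : (Real.sqrt 2 : ℂ)⁻¹ • A ∈ unitaryGroup κ ℂ) (j : κ) :
    ∑ i, A i j * starRingEnd ℂ (A i j) = 2 := by
  have h := congrFun (congrFun (mem_unitaryGroup_iff'.mp hA) j) j
  have hsum : (star ((Real.sqrt 2 : ℂ)⁻¹ • A) * ((Real.sqrt 2 : ℂ)⁻¹ • A)) j j =
      2⁻¹ * ∑ i, A i j * starRingEnd ℂ (A i j) := by
    rw [← conj_inv_sqrt_two_mul_self, Finset.mul_sum]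
    exact Finset.sum_congr rfl fun i _ => by simp; ring
  rw [hsum, one_apply_eq] at h
  linear_combination 2 * h

lemma sum_row_mul_conj_eq_two (hA : (Real.sqrt 2 : ℂ)⁻¹ • A ∈ unitaryGroup κ ℂ) (i : κ) :
    ∑ j, A i j * starRingEnd ℂ (A i j) = 2 :=
  sum_col_mul_conj_eq_two (A := Aᵀ)
    (by rwa [← transpose_smul, transpose_mem_unitaryGroup_iff]) i

end Unitary

section Multisets

open Polynomial

lemma roots_prod_C_sub_X {K : Type*} [CommRing K] [IsDomain K] (s : Multiset K) :
    ((s.map fun a => C a - X).prod).roots = s := by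
  rw [roots_multiset_prod _ (by simpa [sub_eq_zero] using fun a _ => (X_ne_C a).symm),
    Multiset.bind_map]
  simp_rw [← neg_sub X, roots_neg, roots_X_sub_C]
  exact Multiset.bind_singleton s id |>.trans s.map_id

lemma eq_of_forall_prod_map_sub_eq {K : Type*} [CommRing K] [IsDomain K] [Infinite K]
    {A B : Multiset K} (h : ∀ x, (A.map (· - x)).prod = (B.map (· - x)).prod) : A = B := by
  rw [← roots_prod_C_sub_X A, ← roots_prod_C_sub_X B]
  congr 1
  exact Polynomial.funext fun x => by simpa [eval_multiset_prod] using h x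

lemma sum_map_pow_eq_sum_count_mul {K : Type*} [CommSemiring K] [DecidableEq K] {s : Finset K}
    {C : Multiset K} (hC : C.toFinset ⊆ s) (N : ℕ) :
    (C.map (· ^ N)).sum = ∑ v ∈ s, (C.count v : K) * v ^ N := by
  rw [Finset.sum_multiset_map_count, Finset.sum_subset hC]
  · simp only [nsmul_eq_mul]
  · intro v _ hv
    rw [Multiset.count_eq_zero.mpr (by simpa using hv), zero_smul]

lemma filter_ne_zero_eq_of_sum_map_pow_succ_eq {K : Type*} [CommRing K] [IsDomain K]
    [CharZero K] [DecidableEq K] {A B : Multiset K}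
    (h : ∀ N : ℕ, (A.map (· ^ (N + 1))).sum = (B.map (· ^ (N + 1))).sum) :
    A.filter (· ≠ 0) = B.filter (· ≠ 0) := by
  set D := (A + B).toFinset
  set c : K → K := fun v => (A.count v : K) - B.count v
  have hA : A.toFinset ⊆ D := Multiset.toFinset_subset.mpr (Multiset.subset_of_le le_self_add)
  have hB : B.toFinset ⊆ D := Multiset.toFinset_subset.mpr (Multiset.subset_of_le le_add_self)
  have hsum : ∀ N : ℕ, ∑ v ∈ D, c v * v ^ (N + 1) = 0 := fun N => by
    simp only [c, sub_mul, Finset.sum_sub_distrib, ← sum_map_pow_eq_sum_count_mul hA,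
      ← sum_map_pow_eq_sum_count_mul hB, h N, sub_self]
  -- the power sums start at exponent `1`, so the Vandermonde matrix of `D` kills `c v * v`
  have hcD : ∀ v ∈ D, c v * v = 0 := by
    let e := D.equivFin
    have hv := Matrix.eq_zero_of_forall_pow_sum_mul_pow_eq_zero
      (f := fun i => (e.symm i : K)) (v := fun i => c (e.symm i) * e.symm i)
      (Subtype.val_injective.comp e.symm.injective) fun i => by
        rw [← hsum i, ← Finset.sum_coe_sort D, ← e.symm.sum_comp]
        simp only [mul_assoc, ← pow_succ']
    intro v hv'
    simpa using congrFun hv (e ⟨v, hv'⟩)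
  ext v
  simp only [Multiset.count_filter]
  split_ifs with hv0
  · by_cases hvD : v ∈ D
    · exact_mod_cast sub_eq_zero.mp ((mul_eq_zero.mp (hcD v hvD)).resolve_right hv0)
    · rw [Multiset.count_eq_zero.mpr fun h => hvD (hA (Multiset.mem_toFinset.mpr h)),
        Multiset.count_eq_zero.mpr fun h => hvD (hB (Multiset.mem_toFinset.mpr h))]
  · rfl

end Multisets

section Spectral

open Polynomial

variable {n : Type*} [Fintype n] [DecidableEq n]

lemma det_sub_scalar_eq_prod_roots (M : Matrix n n ℂ) (c : ℂ) :
    (M - scalar n c).det = (M.charpoly.roots.map (· - c)).prod := by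
  have hcard : Multiset.card M.charpoly.roots = Fintype.card n := by
    rw [← M.charpoly_natDegree_eq_dim]
    exact (splits_iff_card_roots.mp (IsAlgClosed.splits _))
  rw [← neg_sub, det_neg, ← eval_charpoly,
    (IsAlgClosed.splits _).eval_eq_prod_roots_of_monic M.charpoly_monic, ← hcard,
    ← Multiset.card_map (c - ·), ← Multiset.prod_map_neg, Multiset.map_map]
  simp

lemma roots_charpoly_pow (M : Matrix n n ℂ) (N : ℕ) :
    (M ^ N).charpoly.roots = M.charpoly.roots.map (· ^ N) := by
  have hcard := splits_iff_card_roots.mp (IsAlgClosed.splits M.charpoly)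
  rw [M.charpoly_natDegree_eq_dim] at hcard
  rcases Nat.eq_zero_or_pos N with rfl | hN
  · rw [pow_zero, charpoly_one, ← C_1, roots_pow, roots_X_sub_C]
    simp [hcard, Multiset.nsmul_singleton]
  obtain ⟨ζ, hζ⟩ : ∃ ζ : ℂ, IsPrimitiveRoot ζ N := ⟨_, Complex.isPrimitiveRoot_exp N hN.ne'⟩
  refine eq_of_forall_prod_map_sub_eq fun x => ?_
  obtain ⟨y, hy⟩ := IsAlgClosed.exists_pow_nat_eq x hN
  have hfac : X ^ N - Polynomial.C x = ∏ i ∈ Finset.range N, (X - Polynomial.C (ζ ^ i * y)) :=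
    X_pow_sub_C_eq_prod hζ hN hy
  have hev : ∀ l, ∏ i ∈ Finset.range N, (l - ζ ^ i * y) = l ^ N - x := fun l => by
    simpa [eval_prod] using (congrArg (eval l) hfac).symm
  have haeval : ∀ c, aeval M (X - Polynomial.C c) = M - scalar n c := fun c => by
    rw [map_sub, aeval_X, aeval_C]
    rfl
  rw [← det_sub_scalar_eq_prod_roots]
  calc (M ^ N - scalar n x).det = (aeval M (X ^ N - Polynomial.C x)).det := by
        rw [map_sub, map_pow, aeval_X, aeval_C]
        rfl
    _ = ∏ i ∈ Finset.range N, (M.charpoly.roots.map (· - ζ ^ i * y)).prod := by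
        rw [hfac]
        exact (map_prod (detMonoidHom.comp (aeval M : ℂ[X] →ₐ[ℂ] Matrix n n ℂ).toMonoidHom)
          _ _).trans (Finset.prod_congr rfl fun i _ =>
            (congrArg det (haeval _)).trans (det_sub_scalar_eq_prod_roots M _))
    _ = (M.charpoly.roots.map fun l => ∏ i ∈ Finset.range N, (l - ζ ^ i * y)).prod :=
        Multiset.prod_map_prod_map _ _
    _ = _ := by simp only [hev, Multiset.map_map]; rfl

lemma trace_pow_eq_sum_roots_charpoly (M : Matrix n n ℂ) (N : ℕ) :
    (M ^ N).trace = (M.charpoly.roots.map (· ^ N)).sum := by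
  rw [trace_eq_sum_roots_charpoly, roots_charpoly_pow]

lemma pow_card_eq_zero_of_filter_roots_charpoly_eq_zero (M : Matrix n n ℂ)
    (h : M.charpoly.roots.filter (· ≠ 0) = 0) : M ^ Fintype.card n = 0 := by
  have hX : M.charpoly = X ^ Fintype.card n := by
    rw [(IsAlgClosed.splits _).eq_prod_roots_of_monic M.charpoly_monic,
      Multiset.map_congr rfl (g := fun _ => X) fun x hx => by
        rw [not_not.mp (Multiset.filter_eq_nil.mp h x hx), map_zero, sub_zero],
      Multiset.map_const', Multiset.prod_replicate, ← M.charpoly_natDegree_eq_dim,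
      splits_iff_card_roots.mp (IsAlgClosed.splits _)]
  simpa [hX] using M.aeval_self_charpoly

lemma pow_card_eq_zero_or_of_trace_pow_add_trace_pow (X Y : Matrix n n ℂ) {t : ℂ}
    (ht : t ≠ 0) (h : ∀ N : ℕ, N ≠ 0 → (X ^ N).trace + (Y ^ N).trace = t ^ N) :
    X ^ Fintype.card n = 0 ∨ Y ^ Fintype.card n = 0 := by
  have hfilter := filter_ne_zero_eq_of_sum_map_pow_succ_eq
    (A := X.charpoly.roots + Y.charpoly.roots) (B := {t}) fun N => by
      simpa [← trace_pow_eq_sum_roots_charpoly] using h (N + 1) N.succ_ne_zero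
  rw [Multiset.filter_add, Multiset.filter_singleton, if_pos ht] at hfilter
  have hcard := congrArg Multiset.card hfilter
  rw [Multiset.card_add, Multiset.card_singleton] at hcard
  obtain h0 | h0 : Multiset.card (X.charpoly.roots.filter (· ≠ 0)) = 0 ∨
      Multiset.card (Y.charpoly.roots.filter (· ≠ 0)) = 0 := by omega
  · exact .inl <| pow_card_eq_zero_of_filter_roots_charpoly_eq_zero X <| Multiset.card_eq_zero.mp h0
  · exact .inr <| pow_card_eq_zero_of_filter_roots_charpoly_eq_zero Y <| Multiset.card_eq_zero.mp h0

end Spectral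

def weightedTransfer {ι ν : Type*} [Fintype ι] (A : ι → Matrix ν ν ℂ) (w : ι → ℂ) :
    Matrix (ν × ν) (ν × ν) ℂ :=
  ∑ i, w i • (A i ⊗ₖ mconj (A i))

lemma trace_prod_weightedTransfer {ι ν : Type*} [Fintype ι] [Fintype ν] [DecidableEq ν]
    {N : ℕ} (A : ι → Matrix ν ν ℂ) (w : Fin N → ι → ℂ) :
    (List.ofFn fun j => weightedTransfer A (w j)).prod.trace =
      ∑ g : Fin N → ι, (∏ j, w j (g j)) * (mpsCoeff A g * starRingEnd ℂ (mpsCoeff A g)) := by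
  simp only [weightedTransfer, prod_ofFn_sum, prod_ofFn_smul, trace_sum, trace_smul,
    prod_ofFn_kronecker, trace_kronecker, smul_eq_mul, mpsCoeff]
  refine Finset.sum_congr rfl fun g _ => ?_
  rw [← trace_mconj, mconj_list_prod, List.map_ofFn]
  rfl

section TypeII

variable {d b : ℕ} {p : Fin d → ZMod 2}
  {U : Fin d → Fin d → Matrix (Bool × Fin b) (Bool × Fin b) ℂ}
  {Nm : Fin d → Fin d → Matrix (Fin b) (Fin b) ℂ}

lemma fMPO_apply_of_typeII (hNm : ∀ n m, U n m = (pauliX ^ (p n + p m).val) ⊗ₖ Nm n m)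
    {N : ℕ} (n m : Fin N → Fin d) :
    fMPO p U N n m = sgn (mpoSign p n m) * ((1 + sgn (∑ j, (p (n j) + p (m j)))) *
      mpsCoeff (doubledT Nm) fun j => (n j, m j)) := by
  simp only [fMPO, of_apply, hNm, prod_ofFn_kronecker, trace_kronecker,
    prod_ofFn_pauliX_pow_val, trace_pauliX_pow_val]
  rfl

lemma fMPO_mul_conj_of_typeII (hNm : ∀ n m, U n m = (pauliX ^ (p n + p m).val) ⊗ₖ Nm n m)
    {N : ℕ} (n m : Fin N → Fin d) :
    fMPO p U N n m * starRingEnd ℂ (fMPO p U N n m) =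
      2 * (1 + ∏ j, sgn (doubledP p (n j, m j))) *
        (mpsCoeff (doubledT Nm) (fun j => (n j, m j)) *
          starRingEnd ℂ (mpsCoeff (doubledT Nm) fun j => (n j, m j))) := by
  rw [fMPO_apply_of_typeII hNm]
  set T := mpsCoeff (doubledT Nm) fun j => (n j, m j)
  set s := sgn (∑ j, (p (n j) + p (m j))) with hs
  have hs' : s = ∏ j, sgn (doubledP p (n j, m j)) := by rw [hs, sgn_sum]; rfl
  have hcs : starRingEnd ℂ s = s := conj_sgn _
  simp only [map_mul, map_add, map_one, conj_sgn, hcs, ← hs']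
  -- both signs square to `1`, so `(1 + s) ^ 2 = 2 * (1 + s)`
  linear_combination ((1 + s) ^ 2 * T * starRingEnd ℂ T) * sgn_mul_self (mpoSign p n m) +
    (T * starRingEnd ℂ T) * sgn_mul_self (∑ j, (p (n j) + p (m j)))

lemma sum_weight_mul_fMPO_mul_conj
    (hNm : ∀ n m, U n m = (pauliX ^ (p n + p m).val) ⊗ₖ Nm n m) {N : ℕ}
    (w : Fin N → Fin d × Fin d → ℂ) :
    ∑ n, ∑ m, (∏ j, w j (n j, m j)) * (fMPO p U N n m * starRingEnd ℂ (fMPO p U N n m)) =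
      2 * ((List.ofFn fun j => weightedTransfer (doubledT Nm) (w j)).prod.trace +
        (List.ofFn fun j =>
          weightedTransfer (doubledT Nm) (w j * fun q => sgn (doubledP p q))).prod.trace) := by
  rw [trace_prod_weightedTransfer, trace_prod_weightedTransfer, mul_add,
    ← Fintype.sum_prod_type',
    ← (Equiv.arrowProdEquivProdArrow (Fin N) (fun _ => Fin d) (fun _ => Fin d)).sum_comp,
    Finset.mul_sum, Finset.mul_sum, ← Finset.sum_add_distrib]
  refine Finset.sum_congr rfl fun g _ => ?_
  simp only [fMPO_mul_conj_of_typeII hNm, Pi.mul_apply, Finset.prod_mul_distrib,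
    Equiv.arrowProdEquivProdArrow, Equiv.coe_fn_mk, Prod.mk.eta]
  ring

lemma prod_sum_eq_trace_weightedTransfer_snd
    (hNm : ∀ n m, U n m = (pauliX ^ (p n + p m).val) ⊗ₖ Nm n m) {N : ℕ}
    (hunit : (Real.sqrt 2 : ℂ)⁻¹ • fMPO p U N ∈ unitaryGroup (Fin N → Fin d) ℂ)
    (f : Fin N → Fin d → ℂ) :
    ∏ j, ∑ μ, f j μ =
      (List.ofFn fun j => weightedTransfer (doubledT Nm) (f j ∘ Prod.snd)).prod.trace +
        (List.ofFn fun j => weightedTransfer (doubledT Nm)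
          (f j ∘ Prod.snd * fun q => sgn (doubledP p q))).prod.trace := by
  have h := sum_weight_mul_fMPO_mul_conj hNm fun j => f j ∘ Prod.snd
  simp only [Function.comp_apply] at h
  rw [Finset.sum_comm] at h
  simp only [← Finset.mul_sum, sum_col_mul_conj_eq_two hunit] at h
  rw [← Finset.sum_mul, ← Fintype.prod_sum] at h
  linear_combination h / 2

lemma prod_sum_eq_trace_weightedTransfer_fst
    (hNm : ∀ n m, U n m = (pauliX ^ (p n + p m).val) ⊗ₖ Nm n m) {N : ℕ}
    (hunit : (Real.sqrt 2 : ℂ)⁻¹ • fMPO p U N ∈ unitaryGroup (Fin N → Fin d) ℂ)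
    (f : Fin N → Fin d → ℂ) :
    ∏ j, ∑ μ, f j μ =
      (List.ofFn fun j => weightedTransfer (doubledT Nm) (f j ∘ Prod.fst)).prod.trace +
        (List.ofFn fun j => weightedTransfer (doubledT Nm)
          (f j ∘ Prod.fst * fun q => sgn (doubledP p q))).prod.trace := by
  have h := sum_weight_mul_fMPO_mul_conj hNm fun j => f j ∘ Prod.fst
  simp only [Function.comp_apply] at h
  simp only [← Finset.mul_sum, sum_row_mul_conj_eq_two hunit] at h
  rw [← Finset.sum_mul, ← Fintype.prod_sum] at h
  linear_combination h / 2

lemma sum_sgn_pow_mul_pow_eq_trace_snd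
    (hNm : ∀ n m, U n m = (pauliX ^ (p n + p m).val) ⊗ₖ Nm n m) (a c : ℕ)
    (hunit : (Real.sqrt 2 : ℂ)⁻¹ • fMPO p U (a + c) ∈ unitaryGroup (Fin (a + c) → Fin d) ℂ) :
    (∑ μ, sgn (p μ)) ^ a * (d : ℂ) ^ c =
      (weightedTransfer (doubledT Nm) (fun q => sgn (p q.2)) ^ a *
          weightedTransfer (doubledT Nm) 1 ^ c).trace +
        (weightedTransfer (doubledT Nm) (fun q => sgn (p q.1)) ^ a *
          weightedTransfer (doubledT Nm) (fun q => sgn (doubledP p q)) ^ c).trace := by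
  have h := prod_sum_eq_trace_weightedTransfer_snd hNm hunit
    fun j : Fin (a + c) => if (j : ℕ) < a then (fun μ => sgn (p μ)) else 1
  rw [← List.prod_ofFn, prod_ofFn_apply_ite_lt (fun g : Fin d → ℂ => ∑ μ, g μ),
    prod_ofFn_apply_ite_lt (fun g : Fin d → ℂ => weightedTransfer (doubledT Nm) (g ∘ Prod.snd)),
    prod_ofFn_apply_ite_lt (fun g : Fin d → ℂ =>
      weightedTransfer (doubledT Nm) (g ∘ Prod.snd * fun q => sgn (doubledP p q)))] at h
  simp only [Pi.one_comp, one_mul] at h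
  simpa [Function.comp_def, sgn_snd_mul_sgn_doubledP] using h

lemma sum_sgn_pow_mul_pow_eq_trace_fst
    (hNm : ∀ n m, U n m = (pauliX ^ (p n + p m).val) ⊗ₖ Nm n m) (a c : ℕ)
    (hunit : (Real.sqrt 2 : ℂ)⁻¹ • fMPO p U (a + c) ∈ unitaryGroup (Fin (a + c) → Fin d) ℂ) :
    (∑ μ, sgn (p μ)) ^ a * (d : ℂ) ^ c =
      (weightedTransfer (doubledT Nm) (fun q => sgn (p q.1)) ^ a *
          weightedTransfer (doubledT Nm) 1 ^ c).trace +
        (weightedTransfer (doubledT Nm) (fun q => sgn (p q.2)) ^ a *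
          weightedTransfer (doubledT Nm) (fun q => sgn (doubledP p q)) ^ c).trace := by
  have h := prod_sum_eq_trace_weightedTransfer_fst hNm hunit
    fun j : Fin (a + c) => if (j : ℕ) < a then (fun μ => sgn (p μ)) else 1
  rw [← List.prod_ofFn, prod_ofFn_apply_ite_lt (fun g : Fin d → ℂ => ∑ μ, g μ),
    prod_ofFn_apply_ite_lt (fun g : Fin d → ℂ => weightedTransfer (doubledT Nm) (g ∘ Prod.fst)),
    prod_ofFn_apply_ite_lt (fun g : Fin d → ℂ =>
      weightedTransfer (doubledT Nm) (g ∘ Prod.fst * fun q => sgn (doubledP p q)))] at h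
  simp only [Pi.one_comp, one_mul] at h
  simpa [Function.comp_def, sgn_fst_mul_sgn_doubledP] using h

lemma sum_sgn_eq_zero_of_typeII (hNm : ∀ n m, U n m = (pauliX ^ (p n + p m).val) ⊗ₖ Nm n m)
    (hunit : ∀ N : ℕ, 1 ≤ N →
      (Real.sqrt 2 : ℂ)⁻¹ • fMPO p U N ∈ unitaryGroup (Fin N → Fin d) ℂ) :
    ∑ μ, sgn (p μ) = 0 := by
  have hsnd := fun a c (h : a + c ≠ 0) =>
    sum_sgn_pow_mul_pow_eq_trace_snd hNm a c (hunit _ (Nat.one_le_iff_ne_zero.mpr h))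
  have hfst := fun a c (h : a + c ≠ 0) =>
    sum_sgn_pow_mul_pow_eq_trace_fst hNm a c (hunit _ (Nat.one_le_iff_ne_zero.mpr h))
  set W := weightedTransfer (doubledT Nm)
  set t := ∑ μ, sgn (p μ)
  by_contra ht
  have hd : (d : ℂ) ≠ 0 := by
    rintro hd
    obtain rfl : d = 0 := by exact_mod_cast hd
    exact ht (Finset.sum_of_isEmpty _)
  have hS := pow_card_eq_zero_or_of_trace_pow_add_trace_pow (W 1) (W fun q => sgn (doubledP p q))
    hd fun N hN => by simpa using (hsnd 0 N (by omega)).symm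
  have hK := pow_card_eq_zero_or_of_trace_pow_add_trace_pow (W fun q => sgn (p q.2))
    (W fun q => sgn (p q.1)) ht fun N hN => by simpa using (hsnd N 0 (by omega)).symm
  set B := Fintype.card (Fin b × Fin b)
  have hvanish : ∀ X : Matrix (Fin b × Fin b) (Fin b × Fin b) ℂ, X ^ B = 0 → X ^ (B + 1) = 0 :=
    fun X hX => by rw [pow_succ, hX, zero_mul]
  have hne : t ^ (B + 1) * (d : ℂ) ^ (B + 1) ≠ 0 :=
    mul_ne_zero (pow_ne_zero _ ht) (pow_ne_zero _ hd)
  have h₁ := hsnd (B + 1) (B + 1) (by omega)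
  have h₂ := hfst (B + 1) (B + 1) (by omega)
  rcases hS with hS | hS <;> rcases hK with hK | hK <;>
    simp only [hvanish _ hS, hvanish _ hK, zero_mul, mul_zero, trace_zero, add_zero,
      zero_add] at h₁ h₂ <;>
    first | exact hne h₁ | exact hne h₂

end TypeII

section Counting

variable {ι : Type*} [Fintype ι] (p : ι → ZMod 2)

lemma filter_ne_zero_eq_filter_eq_one :
    Finset.univ.filter (fun i => p i ≠ 0) = Finset.univ.filter (fun i => p i = 1) :=
  Finset.filter_congr fun i _ => by generalize p i = x; revert x; decide

lemma sum_sgn_eq_card_sub_card :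
    ∑ i, sgn (p i) = ((Finset.univ.filter fun i => p i = 0).card : ℂ) -
      (Finset.univ.filter fun i => p i = 1).card := by
  simp only [sgn_eq_ite, Finset.sum_ite, Finset.sum_const, filter_ne_zero_eq_filter_eq_one]
  simp [sub_eq_add_neg]

lemma card_filter_eq_zero_add_card_filter_eq_one :
    (Finset.univ.filter fun i => p i = 0).card + (Finset.univ.filter fun i => p i = 1).card =
      Fintype.card ι := by
  rw [← filter_ne_zero_eq_filter_eq_one, Finset.card_filter_add_card_filter_not,
    Finset.card_univ]

end Counting

theorem typeII_fMPU_physical_dimension_even_general {d b : ℕ}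
    (p : Fin d → ZMod 2)
    (U : Fin d → Fin d → Matrix (Bool × Fin b) (Bool × Fin b) ℂ)
    (hstruct : TypeIIStruct p U)
    (hunit : ∀ N : ℕ, 1 ≤ N →
      ((Real.sqrt 2 : ℂ))⁻¹ • fMPO p U N ∈ Matrix.unitaryGroup (Fin N → Fin d) ℂ) :
    2 ∣ d ∧
    (Finset.univ.filter (fun n : Fin d => p n = 0)).card = d / 2 ∧
    (Finset.univ.filter (fun n : Fin d => p n = 1)).card = d / 2 := by
  obtain ⟨Nm, hNm⟩ := hstruct
  have ht := sum_sgn_eq_zero_of_typeII hNm hunit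
  have hcard := card_filter_eq_zero_add_card_filter_eq_one p
  rw [sum_sgn_eq_card_sub_card, sub_eq_zero, Nat.cast_inj] at ht
  rw [Fintype.card_fin] at hcard
  omega

/-- For a type II fMPU (with antiperiodic boundary conditions) whose
tensor `U/√d` is graded normal degenerate, the physical dimension `d` is even and the
even and odd physical indices are equinumerous, each of cardinality `d/2`. -/
theorem typeII_fMPU_physical_dimension_even {d b : ℕ} (hd : 1 ≤ d)
    (p : Fin d → ZMod 2)
    (U : Fin d → Fin d → Matrix (Bool × Fin b) (Bool × Fin b) ℂ)
    (hE : EvenTensor (doubledP p) (doubledT U) (ZBP b))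
    (hstruct : TypeIIStruct p U)
    (hunit : ∀ N : ℕ, 1 ≤ N →
      ((Real.sqrt 2 : ℂ))⁻¹ • fMPO p U N ∈ Matrix.unitaryGroup (Fin N → Fin d) ℂ)
    (hnorm : GradedNormal (mpoScaled ((Real.sqrt d : ℂ))⁻¹ U) (ZBP b) 2) :
    2 ∣ d ∧
    (Finset.univ.filter (fun n : Fin d => p n = 0)).card = d / 2 ∧
    (Finset.univ.filter (fun n : Fin d => p n = 1)).card = d / 2 :=
  typeII_fMPU_physical_dimension_even_general p U hstruct hunit

end

end FQCA
end

section
/- For every N ≥ 1, the matrix U^{(N)} ∈ M_{4^N}(ℂ) defined from the explicit D = 3 tensor with periodic boundary conditions is unitary. (This family is the example of a fermionic matrix product unitary with periodic boundary conditions.) -/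
open Matrix Kronecker
open scoped ComplexOrder

namespace FQCA

noncomputable section

/-- Physical parity for two fermionic modes per site: `|0| = |3| = 0`, `|1| = |2| = 1`. -/
def pEx : Fin 4 → ZMod 2 := ![0, 1, 1, 0]

/-- The bond parity matrix `Z = diag(1,1,-1)` of the `D = 3` example. -/
def Zex : Matrix (Fin 3) (Fin 3) ℂ := Matrix.diagonal ![1, 1, -1]

/-- The explicit `D = 3` MPO tensor: `U^{0,0} = I₃`,
`(U^{n,m})_{α,β} = δ_{α,n-1} δ_{β,m-1}` for `n,m ∈ {1,2,3}`, and `U^{n,m} = 0` whenever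
exactly one of `n,m` is `0`. -/
def Uex : Fin 4 → Fin 4 → Matrix (Fin 3) (Fin 3) ℂ := fun n m =>
  if n = 0 ∧ m = 0 then (1 : Matrix (Fin 3) (Fin 3) ℂ)
  else if n ≠ 0 ∧ m ≠ 0 then
    Matrix.of (fun α β : Fin 3 =>
      if (α : ℕ) + 1 = (n : ℕ) ∧ (β : ℕ) + 1 = (m : ℕ) then (1 : ℂ) else 0)
  else 0

/-!
Identify the physical index `Fin 4` with `Option (Fin 3)` (`0 ↦ none`, `k + 1 ↦ some k`).
Then `U^{none,none} = 1`, `U^{some a, some b} = E_{ab}` and every other `U^{n,m}` vanishes, so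
the product along the chain is the product of the matrix units at the occupied sites, and
`tr(Z E_{a₁b₁} ⋯ E_{a_k b_k})` is `Z_{a₁a₁} = ±1` if `(b₁, …, b_k) = (a₂, …, a_k, a₁)` and `0`
otherwise. Hence `⟨n|U^{(N)}|m⟩ ≠ 0` exactly when `m` is empty where `n` is and its occupied
labels are those of `n` rotated by one, and then the entry is `±1`. This relation is the graph
of an injective map, so `U^{(N)}` is a signed permutation matrix.
-/

section
open List
variable {α : Type*}

theorem length_reduceOption_eq_of_map_isSome_eq {x y : List (Option α)}
    (h : x.map Option.isSome = y.map Option.isSome) :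
    x.reduceOption.length = y.reduceOption.length := by
  rw [reduceOption_length_eq, reduceOption_length_eq, ← countP_eq_length_filter,
    ← countP_eq_length_filter]
  simpa only [countP_map, Function.id_comp] using congrArg (countP id) h

theorem eq_of_map_isSome_eq_of_reduceOption_eq :
    ∀ {x y : List (Option α)}, x.map Option.isSome = y.map Option.isSome →
      x.reduceOption = y.reduceOption → x = y
  | [], [], _, _ => rfl
  | none :: x, none :: y, hs, hr => by
    simp only [reduceOption_cons_of_none, map_cons, cons.injEq, true_and] at hs hr ⊢
    exact eq_of_map_isSome_eq_of_reduceOption_eq hs hr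
  | some a :: x, some b :: y, hs, hr => by
    simp only [reduceOption_cons_of_some, map_cons, cons.injEq, Option.some.injEq,
      Option.isSome_some, true_and] at hs hr ⊢
    exact ⟨hr.1, eq_of_map_isSome_eq_of_reduceOption_eq hs hr.2⟩
  | none :: _, some _ :: _, hs, _ | some _ :: _, none :: _, hs, _ => by simp at hs

theorem exists_map_isSome_eq_and_reduceOption_eq :
    ∀ (x : List (Option α)) (r : List α), r.length = x.reduceOption.length →
      ∃ y : List (Option α), y.map Option.isSome = x.map Option.isSome ∧ y.reduceOption = r
  | [], [], _ => ⟨[], rfl, rfl⟩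
  | none :: x, r, h => by
    obtain ⟨y, hs, hr⟩ := exists_map_isSome_eq_and_reduceOption_eq x r (by simpa using h)
    exact ⟨none :: y, by simp [hs], by simp [hr]⟩
  | some _ :: x, b :: r, h => by
    obtain ⟨y, hs, hr⟩ := exists_map_isSome_eq_and_reduceOption_eq x r (by simpa using h)
    exact ⟨some b :: y, by simp [hs], by simp [hr]⟩
  | [], _ :: _, h | some _ :: _, [], h => by simp at h

theorem eq_rotate_one_of_cons_eq_append_singleton {a : α} {as bs : List α}
    (h : a :: bs = as ++ [a]) : bs = as.rotate 1 := by
  cases as with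
  | nil => simpa using h
  | cons c cs =>
    simp only [cons_append, cons.injEq] at h
    rw [h.2, h.1, rotate_cons_succ, rotate_zero]

end

theorem mem_unitaryGroup_of_monomial {n R : Type*} [Fintype n] [DecidableEq n] [CommRing R]
    [StarRing R] (A : Matrix n n R) (f : n → n) (hf : Function.Injective f)
    (hsupp : ∀ i j, A i j ≠ 0 → j = f i) (hunit : ∀ i, A i (f i) * star (A i (f i)) = 1) :
    A ∈ unitaryGroup n R := by
  rw [mem_unitaryGroup_iff]
  ext i i'
  rw [mul_apply, Finset.sum_eq_single (f i)]
  · by_cases hii' : i = i'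
    · subst hii'
      simpa using hunit i
    · have hzero : A i' (f i) = 0 := by
        by_contra h
        exact hii' (hf (hsupp i' (f i) h))
      simp [hzero, one_apply_ne hii']
  · intro j _ hj
    simp [not_not.mp (mt (hsupp i j) hj)]
  · simp

def shiftTensor {ν R : Type*} [DecidableEq ν] [Semiring R] :
    Option ν → Option ν → Matrix ν ν R
  | none, none => 1
  | some a, some b => single a b 1
  | _, _ => 0

section
variable {ν R : Type*} [Fintype ν] [DecidableEq ν] [Semiring R]

theorem prod_zipWith_single_apply :
    ∀ (as bs : List ν), as.length = bs.length → ∀ i j : ν,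
      (List.zipWith (fun a b => single a b (1 : R)) as bs).prod i j =
        if i :: bs = as ++ [j] then 1 else 0
  | [], [], _, i, j => by simp [one_apply]
  | a :: as, b :: bs, h, i, j => by
    rw [List.zipWith_cons_cons, List.prod_cons]
    by_cases hi : i = a
    · rw [hi, single_mul_apply_same, one_mul,
        prod_zipWith_single_apply as bs (by simpa using h) b j]
      simp
    · rw [single_mul_apply_of_ne _ _ _ _ _ hi]
      simp [hi]

theorem trace_diagonal_mul_prod_zipWith_single (d : ν → R) (as bs : List ν)
    (h : as.length = bs.length) :
    (diagonal d * (List.zipWith (fun a b => single a b (1 : R)) as bs).prod).trace =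
      ∑ i, if i :: bs = as ++ [i] then d i else 0 := by
  simp [trace, diagonal_mul, prod_zipWith_single_apply as bs h]

theorem prod_zipWith_shiftTensor :
    ∀ (x y : List (Option ν)), x.length = y.length →
      (List.zipWith shiftTensor x y).prod =
        if x.map Option.isSome = y.map Option.isSome then
          (List.zipWith (fun a b => single a b (1 : R)) x.reduceOption y.reduceOption).prod
        else 0
  | [], [], _ => by simp
  | none :: x, none :: y, h => by
    simp [shiftTensor, prod_zipWith_shiftTensor x y (by simpa using h)]
  | some a :: x, some b :: y, h => by
    simp [shiftTensor, prod_zipWith_shiftTensor x y (by simpa using h), mul_ite]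
  | none :: _, some _ :: _, _ | some _ :: _, none :: _, _ => by simp [shiftTensor]

end

def IsOccupiedRotation {ν : Type*} (x y : List (Option ν)) : Prop :=
  x.map Option.isSome = y.map Option.isSome ∧ y.reduceOption = x.reduceOption.rotate 1

namespace IsOccupiedRotation
variable {ν : Type*} {x x' y y' : List (Option ν)}

theorem length_eq (h : IsOccupiedRotation x y) : x.length = y.length := by
  simpa using congrArg List.length h.1

theorem right_unique (h : IsOccupiedRotation x y) (h' : IsOccupiedRotation x y') : y = y' :=
  eq_of_map_isSome_eq_of_reduceOption_eq (h.1.symm.trans h'.1) (h.2.trans h'.2.symm)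

theorem left_unique (h : IsOccupiedRotation x y) (h' : IsOccupiedRotation x' y) : x = x' :=
  eq_of_map_isSome_eq_of_reduceOption_eq (h.1.trans h'.1.symm)
    (List.rotate_eq_rotate.mp (h.2.symm.trans h'.2))

end IsOccupiedRotation

theorem exists_isOccupiedRotation {ν : Type*} (x : List (Option ν)) :
    ∃ y, IsOccupiedRotation x y := by
  obtain ⟨y, hs, hr⟩ := exists_map_isSome_eq_and_reduceOption_eq x
    (x.reduceOption.rotate 1) (List.length_rotate ..)
  exact ⟨y, hs.symm, hr⟩

section
variable {ν R : Type*} [Fintype ν] [DecidableEq ν] [Semiring R] (d : ν → R)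

theorem isOccupiedRotation_of_trace_ne_zero {x y : List (Option ν)} (hxy : x.length = y.length)
    (h : (diagonal d * (List.zipWith shiftTensor x y).prod).trace ≠ 0) :
    IsOccupiedRotation x y := by
  rw [prod_zipWith_shiftTensor x y hxy] at h
  split_ifs at h with hs
  · rw [trace_diagonal_mul_prod_zipWith_single d _ _
      (length_reduceOption_eq_of_map_isSome_eq hs)] at h
    obtain ⟨i, -, hi⟩ := Finset.exists_ne_zero_of_sum_ne_zero h
    split_ifs at hi with hc
    · exact ⟨hs, eq_rotate_one_of_cons_eq_append_singleton hc⟩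
    · exact absurd rfl hi
  · simp at h

theorem trace_of_isOccupiedRotation {x y : List (Option ν)} (h : IsOccupiedRotation x y) :
    (diagonal d * (List.zipWith shiftTensor x y).prod).trace =
      x.reduceOption.head?.elim (∑ i, d i) d := by
  rw [prod_zipWith_shiftTensor x y h.length_eq, if_pos h.1,
    trace_diagonal_mul_prod_zipWith_single d _ _
      (length_reduceOption_eq_of_map_isSome_eq h.1), h.2]
  cases x.reduceOption with
  | nil => simp
  | cons a as => simp [List.rotate_cons_succ, eq_comm]

end

theorem sgn_mul_star_self (x : ZMod 2) : sgn x * star (sgn x) = 1 := by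
  simp [sgn, ← mul_pow]

theorem ofFn_eq_zipWith {α β γ : Type*} {N : ℕ} (f : α → β → γ) (x : Fin N → α)
    (y : Fin N → β) :
    List.ofFn (fun j => f (x j) (y j)) = List.zipWith f (List.ofFn x) (List.ofFn y) :=
  List.ext_getElem (by simp) (by simp)

theorem exists_isOccupiedRotation_ofFn {ι ν : Type*} {N : ℕ} (e : ι ≃ Option ν)
    (n : Fin N → ι) :
    ∃ m : Fin N → ι, IsOccupiedRotation (List.ofFn (e ∘ n)) (List.ofFn (e ∘ m)) := by
  obtain ⟨y, hy⟩ := exists_isOccupiedRotation (List.ofFn (e ∘ n))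
  obtain rfl : y.length = N := by simpa using hy.length_eq.symm
  exact ⟨e.symm ∘ y.get, by simpa [Function.comp_def] using hy⟩

theorem fMPO_PBC_shiftTensor_mem_unitaryGroup {ι ν : Type*} [Fintype ι] [DecidableEq ι]
    [Fintype ν] [DecidableEq ν] (p : ι → ZMod 2) (e : ι ≃ Option ν) (d : ν → ℂ)
    (hd : ∀ a, d a * star (d a) = 1) (htr : (∑ a, d a) * star (∑ a, d a) = 1) (N : ℕ) :
    fMPO_PBC p (diagonal d) (fun n m => shiftTensor (e n) (e m)) N ∈
      unitaryGroup (Fin N → ι) ℂ := by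
  have occ_injective : Function.Injective fun n : Fin N → ι => List.ofFn (e ∘ n) :=
    fun n n' h => e.injective.comp_left (List.ofFn_injective h)
  have happly : ∀ n m, fMPO_PBC p (diagonal d) (fun n m => shiftTensor (e n) (e m)) N n m =
      sgn (mpoSign p n m) * (diagonal d *
        (List.zipWith shiftTensor (List.ofFn (e ∘ n)) (List.ofFn (e ∘ m))).prod).trace :=
    fun n m => by rw [fMPO_PBC, of_apply, ofFn_eq_zipWith]; rfl
  choose f hf using exists_isOccupiedRotation_ofFn (N := N) e
  refine mem_unitaryGroup_of_monomial _ f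
    (fun n n' h => occ_injective ((hf n).left_unique (h ▸ hf n'))) (fun n m h => ?_)
    (fun n => ?_)
  · rw [happly] at h
    exact occ_injective ((isOccupiedRotation_of_trace_ne_zero d (by simp)
      (right_ne_zero_of_mul h)).right_unique (hf n))
  · rw [happly, trace_of_isOccupiedRotation d (hf n), star_mul', mul_mul_mul_comm,
      sgn_mul_star_self, one_mul]
    cases (List.ofFn (e ∘ n)).reduceOption.head? with
    | none => exact htr
    | some a => exact hd a

theorem Uex_eq_shiftTensor (n m : Fin 4) :
    Uex n m = shiftTensor (finSuccEquiv 3 n) (finSuccEquiv 3 m) := by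
  induction n using Fin.cases <;> induction m using Fin.cases <;>
    simp only [finSuccEquiv_zero, finSuccEquiv_succ, shiftTensor] <;> unfold Uex
  · simp
  · simp [Fin.succ_ne_zero]
  · simp [Fin.succ_ne_zero]
  · rw [if_neg (by simp [Fin.succ_ne_zero]), if_pos ⟨Fin.succ_ne_zero _, Fin.succ_ne_zero _⟩]
    ext α β
    simp only [of_apply, single_apply, Fin.ext_iff, Fin.val_succ, add_left_inj, eq_comm]

/-- The fMPO with periodic boundary conditions generated by the
explicit `D = 3` tensor is unitary for every `N ≥ 1`. -/
theorem explicit_periodic_fMPU_unitary :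
    ∀ N : ℕ, 1 ≤ N →
      fMPO_PBC pEx Zex Uex N ∈ Matrix.unitaryGroup (Fin N → Fin 4) ℂ := by
  intro N _
  have hUex : Uex = fun n m => shiftTensor (finSuccEquiv 3 n) (finSuccEquiv 3 m) :=
    funext₂ Uex_eq_shiftTensor
  rw [hUex, Zex]
  refine fMPO_PBC_shiftTensor_mem_unitaryGroup pEx (finSuccEquiv 3) _ (fun a => ?_) ?_ N
  · fin_cases a <;> simp
  · simp [Fin.sum_univ_three]
end

end FQCA
end

section
/- M is invertible in C, with inverse M^{−1} = ∏_{j=2N−1}^{1} 2^{−1/2}(1 + γ_j γ_{j+1}) (the product taken left to right in decreasing order of j), and M implements the Majorana shift with antiperiodic boundary conditions: M γ_j M^{−1} = γ_{j+1} for every 1 ≤ j ≤ 2N−1, and M γ_{2N} M^{−1} = −γ₁. -/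
/-!
Write `aₖ = γₖ γₖ₊₁`. Since `aₖ² = -1`, `aₖ` anticommutes with `γₖ` and `γₖ₊₁` and commutes with
every other mode, the factor `Rₖ = (1 - aₖ)/√2` has inverse `(1 + aₖ)/√2`, and conjugation by it
sends `γₖ ↦ γₖ₊₁`, `γₖ₊₁ ↦ -γₖ` and fixes the other modes. Conjugating `γⱼ` by
`M = R₁ ⋯ R_{2N-1}`, the factors after `Rⱼ` fix `γⱼ`, `Rⱼ` turns it into `γⱼ₊₁`, and the factors
before `Rⱼ` fix `γⱼ₊₁`. The last mode `γ_{2N}` is instead moved down one step by every factor,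
picking up the sign `(-1)^(2N-1) = -1`.
-/

open Matrix Kronecker
open scoped ComplexOrder

namespace FQCA

noncomputable section

/-- The standard quadratic form `Q(x) = Σ xᵢ²` on `ℝⁿ`. -/
def Qf (n : ℕ) : QuadraticForm ℝ (Fin n → ℝ) :=
  QuadraticMap.weightedSumSquares ℝ (fun _ : Fin n => (1 : ℝ))

/-- The Majorana modes: `γⱼ = ι(eⱼ)` in the Clifford algebra of `Q`, so that
`γⱼ γₖ + γₖ γⱼ = 2 δⱼₖ`. -/
def γm (N : ℕ) (j : Fin (2 * N)) : CliffordAlgebra (Qf (2 * N)) :=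
  CliffordAlgebra.ι (Qf (2 * N)) (Pi.single j 1)

/-- The Majorana shift operator
`M = 2^{-(2N-1)/2} (1 - γ₁γ₂)(1 - γ₂γ₃) ⋯ (1 - γ_{2N-1}γ_{2N})`
(factors in increasing order). -/
def Mop (N : ℕ) : CliffordAlgebra (Qf (2 * N)) :=
  (List.ofFn fun j : Fin (2 * N - 1) =>
    (Real.sqrt 2)⁻¹ •
      ((1 : CliffordAlgebra (Qf (2 * N))) -
        γm N ⟨(j : ℕ), by have := j.isLt; omega⟩ *
        γm N ⟨(j : ℕ) + 1, by have := j.isLt; omega⟩)).prod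

/-- The claimed inverse
`∏_{j=2N-1}^{1} 2^{-1/2} (1 + γⱼγ_{j+1})` (factors in decreasing order of `j`). -/
def Minv (N : ℕ) : CliffordAlgebra (Qf (2 * N)) :=
  ((List.ofFn fun j : Fin (2 * N - 1) =>
    (Real.sqrt 2)⁻¹ •
      ((1 : CliffordAlgebra (Qf (2 * N))) +
        γm N ⟨(j : ℕ), by have := j.isLt; omega⟩ *
        γm N ⟨(j : ℕ) + 1, by have := j.isLt; omega⟩)).reverse).prod

section OrderedProducts

variable {M : Type*}

def ascProd [Monoid M] (u : ℕ → M) (m : ℕ) : M := ((List.range m).map u).prod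

def descProd [Monoid M] (v : ℕ → M) (m : ℕ) : M := ((List.range m).map v).reverse.prod

section Monoid

variable [Monoid M] (u v : ℕ → M)

@[simp] lemma ascProd_zero : ascProd u 0 = 1 := rfl

@[simp] lemma descProd_zero : descProd v 0 = 1 := rfl

lemma ascProd_succ (m : ℕ) : ascProd u (m + 1) = ascProd u m * u m :=
  List.prod_range_succ u m

lemma descProd_succ (m : ℕ) : descProd v (m + 1) = v m * descProd v m := by
  simp [descProd, List.range_succ]

lemma commute_ascProd {x : M} {m : ℕ} (h : ∀ k < m, Commute (u k) x) :
    Commute (ascProd u m) x :=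
  Commute.list_prod_left _ _ <| by simpa using h

variable {u v} {g : ℕ → M}

lemma ascProd_mul_descProd {m : ℕ} (h : ∀ k < m, u k * v k = 1) :
    ascProd u m * descProd v m = 1 := by
  induction m with
  | zero => simp
  | succ m ih =>
    calc ascProd u (m + 1) * descProd v (m + 1)
        = ascProd u m * (u m * v m) * descProd v m := by
          simp only [ascProd_succ, descProd_succ, mul_assoc]
      _ = 1 := by rw [h m m.lt_succ_self, mul_one, ih fun k hk => h k (by omega)]

lemma descProd_mul_ascProd {m : ℕ} (h : ∀ k < m, v k * u k = 1) :
    descProd v m * ascProd u m = 1 := by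
  induction m with
  | zero => simp
  | succ m ih =>
    calc descProd v (m + 1) * ascProd u (m + 1)
        = v m * (descProd v m * ascProd u m) * u m := by
          simp only [ascProd_succ, descProd_succ, mul_assoc]
      _ = 1 := by rw [ih fun k hk => h k (by omega), mul_one, h m m.lt_succ_self]

lemma ascProd_mul_mul_descProd_of_lt {m : ℕ} (huv : ∀ k < m, u k * v k = 1)
    (hcomm : ∀ k < m, ∀ i ≤ m, i ≠ k → i ≠ k + 1 → Commute (u k) (g i))
    (hshift : ∀ k < m, u k * g k * v k = g (k + 1)) {j : ℕ} (hj : j < m) :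
    ascProd u m * g j * descProd v m = g (j + 1) := by
  induction m with
  | zero => omega
  | succ m ih =>
    have split : ascProd u (m + 1) * g j * descProd v (m + 1)
        = ascProd u m * (u m * g j * v m) * descProd v m := by
      simp only [ascProd_succ, descProd_succ, mul_assoc]
    rw [split]
    rcases Nat.lt_succ_iff_lt_or_eq.mp hj with hjm | rfl
    · -- `u m` commutes past `g j` and cancels against `v m`
      rw [(hcomm m m.lt_succ_self j (by omega) (by omega) (by omega)).eq, mul_assoc (g j),
        huv m m.lt_succ_self, mul_one]
      exact ih (fun k hk => huv k (by omega))
        (fun k hk i hi => hcomm k (by omega) i (by omega))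
        (fun k hk => hshift k (by omega)) hjm
    · -- the earlier factors all commute with `g (j + 1)`
      rw [hshift j j.lt_succ_self,
        (commute_ascProd u fun k hk => hcomm k (by omega) (j + 1) le_rfl (by omega)
          (by omega)).eq, mul_assoc, ascProd_mul_descProd fun k hk => huv k (by omega),
        mul_one]

end Monoid

lemma ascProd_mul_mul_descProd_self [Ring M] {u v g : ℕ → M} {m : ℕ}
    (h : ∀ k < m, u k * g (k + 1) * v k = -g k) :
    ascProd u m * g m * descProd v m = (-1) ^ m * g 0 := by
  induction m with
  | zero => simp
  | succ m ih =>
    calc ascProd u (m + 1) * g (m + 1) * descProd v (m + 1)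
        = ascProd u m * (u m * g (m + 1) * v m) * descProd v m := by
          simp only [ascProd_succ, descProd_succ, mul_assoc]
      _ = (-1) ^ (m + 1) * g 0 := by
          rw [h m m.lt_succ_self, mul_neg, neg_mul, ih fun k hk => h k (by omega), pow_succ,
            mul_neg_one, neg_mul]

end OrderedProducts

section Rotor

variable {A : Type*} [Ring A] [Algebra ℝ A] {a : A}

/-- For `a * a = -1` this is `exp (-(π / 4) a)`. -/
def rotor (a : A) : A := (√2)⁻¹ • (1 - a)

lemma inv_sqrt_two_smul_mul_inv_sqrt_two_smul (x y : A) :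
    (√2)⁻¹ • x * ((√2)⁻¹ • y) = (2 : ℝ)⁻¹ • (x * y) := by
  rw [smul_mul_smul_comm, ← mul_inv, Real.mul_self_sqrt zero_le_two]

lemma rotor_mul_rotor_neg (ha : a * a = -1) : rotor a * rotor (-a) = 1 := by
  have : (1 - a) * (1 - -a) = (2 : ℝ) • 1 := calc
    _ = 1 - a * a := by noncomm_ring
    _ = (2 : ℝ) • 1 := by rw [ha, sub_neg_eq_add, two_smul]
  rw [rotor, rotor, inv_sqrt_two_smul_mul_inv_sqrt_two_smul, this, smul_smul,
    inv_mul_cancel₀ two_ne_zero, one_smul]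

lemma rotor_neg_mul_rotor (ha : a * a = -1) : rotor (-a) * rotor a = 1 := by
  simpa using rotor_mul_rotor_neg (a := -a) (by rwa [neg_mul_neg])

lemma rotor_mul_mul_rotor_neg {z : A} (ha : a * a = -1) (haz : a * z = -(z * a)) :
    rotor a * z * rotor (-a) = z * a := by
  have hpass : (1 - a) * z = z * (1 - -a) := by
    rw [sub_mul, haz, mul_sub, one_mul, mul_one, mul_neg]
  have hsq : (1 - -a) * (1 - -a) = (2 : ℝ) • a := calc
    _ = 1 + a * a + (a + a) := by noncomm_ring
    _ = (2 : ℝ) • a := by rw [ha, add_neg_cancel, zero_add, two_smul]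
  have : (1 - a) * z * (1 - -a) = (2 : ℝ) • (z * a) := by
    rw [hpass, mul_assoc, hsq, mul_smul_comm]
  rw [rotor, rotor, smul_mul_assoc, inv_sqrt_two_smul_mul_inv_sqrt_two_smul, this, smul_smul,
    inv_mul_cancel₀ two_ne_zero, one_smul]

lemma commute_rotor_of_commute {z : A} (h : Commute a z) : Commute (rotor a) z :=
  ((Commute.one_left z).sub_left h).smul_left _

end Rotor

section AnticommutingInvolutions

variable {R : Type*} [Ring R] {x y z : R}

lemma mul_mul_self_eq_neg_one (hx : x * x = 1) (hy : y * y = 1) (hxy : x * y = -(y * x)) :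
    x * y * (x * y) = -1 := by
  rw [mul_assoc, ← mul_assoc y, ← neg_neg (y * x), ← hxy, neg_mul, mul_assoc, hy, mul_one,
    mul_neg, hx]

lemma mul_anticomm_of_anticomm_left (hxy : x * y = -(y * x)) : x * y * x = -(x * (x * y)) := by
  rw [mul_assoc, ← neg_neg (y * x), ← hxy, mul_neg]

lemma mul_anticomm_of_anticomm_right (hxy : x * y = -(y * x)) :
    x * y * y = -(y * (x * y)) := by
  conv_lhs => rw [hxy, neg_mul, mul_assoc]

lemma commute_mul_of_anticomm (hzx : z * x = -(x * z)) (hzy : z * y = -(y * z)) :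
    Commute (x * y) z := by
  rw [Commute, SemiconjBy, mul_assoc, ← neg_neg (y * z), ← hzy, mul_neg, ← mul_assoc, ← mul_assoc,
    ← neg_mul, ← hzx, mul_assoc]

end AnticommutingInvolutions

lemma Qf_single (n : ℕ) (i : Fin n) : Qf n (Pi.single i 1) = 1 := by
  simp [Qf, QuadraticMap.weightedSumSquares_apply, Pi.single_apply]

lemma Qf_isOrtho_single {n : ℕ} {i j : Fin n} (h : i ≠ j) :
    (Qf n).IsOrtho (Pi.single i 1) (Pi.single j 1) := by
  simp only [QuadraticMap.isOrtho_def, Qf, QuadraticMap.weightedSumSquares_apply, one_smul,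
    Pi.add_apply, ← Finset.sum_add_distrib]
  refine Finset.sum_congr rfl fun x _ => ?_
  rcases eq_or_ne x i with rfl | hxi
  · simp [h]
  · simp [hxi]

section MajoranaModes

variable {N j k : ℕ}

/-- `γm` indexed by `ℕ`, with the junk value `0` from `2 * N` on. -/
def γnat (N j : ℕ) : CliffordAlgebra (Qf (2 * N)) :=
  if h : j < 2 * N then γm N ⟨j, h⟩ else 0

lemma γnat_of_lt (h : j < 2 * N) : γnat N j = γm N ⟨j, h⟩ := dif_pos h

lemma γnat_mul_self (h : j < 2 * N) : γnat N j * γnat N j = 1 := by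
  rw [γnat_of_lt h, γm, CliffordAlgebra.ι_sq_scalar, Qf_single, map_one]

lemma γnat_anticomm (hj : j < 2 * N) (hk : k < 2 * N) (hne : j ≠ k) :
    γnat N j * γnat N k = -(γnat N k * γnat N j) := by
  rw [γnat_of_lt hj, γnat_of_lt hk]
  exact CliffordAlgebra.ι_mul_ι_comm_of_isOrtho (Qf_isOrtho_single (by simpa [Fin.ext_iff]))

/-- The bond element `γₖ γₖ₊₁` of the paper (shifted to `0`-based indexing). -/
def γpair (N k : ℕ) : CliffordAlgebra (Qf (2 * N)) := γnat N k * γnat N (k + 1)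

variable (h : k + 1 < 2 * N)
include h

lemma γpair_mul_self : γpair N k * γpair N k = -1 :=
  mul_mul_self_eq_neg_one (γnat_mul_self (by omega)) (γnat_mul_self h)
    (γnat_anticomm (by omega) h (by omega))

lemma rotor_γpair_conj_γnat_self : rotor (γpair N k) * γnat N k * rotor (-γpair N k) =
    γnat N (k + 1) := by
  rw [rotor_mul_mul_rotor_neg (γpair_mul_self h)
    (mul_anticomm_of_anticomm_left (γnat_anticomm (by omega) h (by omega))), γpair, ← mul_assoc,
    γnat_mul_self (by omega), one_mul]

lemma rotor_γpair_conj_γnat_succ : rotor (γpair N k) * γnat N (k + 1) * rotor (-γpair N k) =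
    -γnat N k := by
  rw [rotor_mul_mul_rotor_neg (γpair_mul_self h)
    (mul_anticomm_of_anticomm_right (γnat_anticomm (by omega) h (by omega))), γpair, ← mul_assoc,
    γnat_anticomm h (by omega) (by omega), neg_mul, mul_assoc, γnat_mul_self h, mul_one]

lemma commute_rotor_γpair_γnat {i : ℕ} (hi : i < 2 * N) (hik : i ≠ k) (hik' : i ≠ k + 1) :
    Commute (rotor (γpair N k)) (γnat N i) :=
  commute_rotor_of_commute <| commute_mul_of_anticomm (γnat_anticomm hi (by omega) hik)
    (γnat_anticomm hi h hik')

end MajoranaModes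

lemma Mop_eq (N : ℕ) : Mop N = ascProd (fun k => rotor (γpair N k)) (2 * N - 1) := by
  rw [Mop, ascProd]
  congr 1
  refine List.ext_getElem (by simp) fun i hi _ => ?_
  simp only [List.length_ofFn] at hi
  simp [rotor, γpair, γnat_of_lt (show i < 2 * N by omega),
    γnat_of_lt (show i + 1 < 2 * N by omega)]

lemma Minv_eq (N : ℕ) : Minv N = descProd (fun k => rotor (-γpair N k)) (2 * N - 1) := by
  rw [Minv, descProd]
  congr 2
  refine List.ext_getElem (by simp) fun i hi _ => ?_
  simp only [List.length_ofFn] at hi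
  simp [rotor, γpair, γnat_of_lt (show i < 2 * N by omega),
    γnat_of_lt (show i + 1 < 2 * N by omega)]

/-- `M` is invertible, with the stated explicit inverse, and implements
the Majorana shift with antiperiodic boundary conditions:
`M γⱼ M⁻¹ = γ_{j+1}` for `1 ≤ j ≤ 2N-1` and `M γ_{2N} M⁻¹ = -γ₁`. -/
theorem majorana_shift (N : ℕ) (hN : 1 ≤ N) :
    Mop N * Minv N = 1 ∧
    Minv N * Mop N = 1 ∧
    (∀ (j : ℕ) (hj : j + 1 < 2 * N),
      Mop N * γm N ⟨j, by omega⟩ * Minv N = γm N ⟨j + 1, hj⟩) ∧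
    Mop N * γm N ⟨2 * N - 1, by omega⟩ * Minv N = - γm N ⟨0, by omega⟩ := by
  rw [Mop_eq, Minv_eq]
  refine ⟨ascProd_mul_descProd fun k hk => rotor_mul_rotor_neg (γpair_mul_self (by omega)),
    descProd_mul_ascProd fun k hk => rotor_neg_mul_rotor (γpair_mul_self (by omega)),
    fun j hj => ?_, ?_⟩
  · rw [← γnat_of_lt, ← γnat_of_lt]
    exact ascProd_mul_mul_descProd_of_lt
      (fun k hk => rotor_mul_rotor_neg (γpair_mul_self (by omega)))
      (fun k hk i hi => commute_rotor_γpair_γnat (by omega) (by omega))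
      (fun k hk => rotor_γpair_conj_γnat_self (by omega)) (by omega)
  · rw [← γnat_of_lt, ← γnat_of_lt,
      ascProd_mul_mul_descProd_self fun k hk => rotor_γpair_conj_γnat_succ (by omega),
      Odd.neg_one_pow ⟨N - 1, by omega⟩, neg_one_mul]

end

end FQCA
end
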